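/- arXiv:math/0211329 — 4 statements merged into one kernel-verified Lean document; each statement's English description precedes it below -/
import Mathlib

section
/- Let R be a commutative Noetherian ring, let I be an ideal of R, and let x ∈ R. Then x lies in the integral closure of I (i.e., x satisfies an equation x^n + a_1 x^{n-1} + ⋯ + a_n = 0 with a_j ∈ I^j for 1 ≤ j ≤ n) if and only if there exist an element c ∈ R not contained in any minimal prime of R and an integer n_0 such that c x^n ∈ I^n for all n ≥ n_0. -/
open Ideal

/-- `R⁰`: the set of elements of `R` not contained in any minimal prime. -/
def MemRzero {R : Type*} [CommRing R] (c : R) : Prop := ∀ P ∈ minimalPrimes R, c ∉ P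

/-- `x` is integral over the ideal `I`: it satisfies an equation
`x ^ n + a 1 * x ^ (n-1) + ⋯ + a n = 0` with `a j ∈ I ^ j` for `1 ≤ j ≤ n`. -/
def MemIntegralClosure {R : Type*} [CommRing R] (I : Ideal R) (x : R) : Prop :=
  ∃ n : ℕ, 0 < n ∧ ∃ a : ℕ → R, (∀ j, 1 ≤ j → j ≤ n → a j ∈ I ^ j) ∧
    x ^ n + ∑ j ∈ Finset.Icc 1 n, a j * x ^ (n - j) = 0

/-!
If `x` satisfies an equation of integral dependence of degree `k + 1` over `I`, then
`x ^ (k + m) ∈ I ^ m` for all `m`. The ideal `(x ^ k) + {e | e * x ^ N = 0 for some N}` lies in no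
minimal prime, because `x` is nilpotent in the localization at a minimal prime containing it; by
prime avoidance it contains some `c ∈ R⁰`, and `c * x ^ m ∈ x ^ (k + m) R ⊆ I ^ m` for large `m`.

Conversely, put `y = c * x ^ n₀`. The elements `y * x ^ m * t ^ m` lie in the Rees algebra `R[It]`,
which is Noetherian, so one of them lies in the ideal generated by the earlier ones. Reading off
one coefficient gives `y * p x = 0` for a monic `p` of degree `d` whose coefficient of `X ^ i` lies
in `I ^ (d - i)`. As `c ∈ R⁰`, the element `x ^ n₀ * p x` lies in every minimal prime, so it is
nilpotent, and a power of `X ^ n₀ * p` is an equation of integral dependence of `x` over `I`.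
-/

open Polynomial Finset

section

variable {R : Type*} [CommRing R]

namespace Polynomial

variable {I : Ideal R} {n m : ℕ} {p q : R[X]}

-- `natDegree ≤ n ∧ coeff n = 1` rather than `Monic ∧ natDegree = n`, which fails in the zero ring.
def IsIntegralDependence (I : Ideal R) (n : ℕ) (p : R[X]) : Prop :=
  p.natDegree ≤ n ∧ p.coeff n = 1 ∧ ∀ i, p.coeff i ∈ I ^ (n - i)

theorem isIntegralDependence_X_pow (I : Ideal R) (n : ℕ) :
    (X ^ n : R[X]).IsIntegralDependence I n := by
  refine ⟨natDegree_X_pow_le n, coeff_X_pow_self n, fun i => ?_⟩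
  rw [coeff_X_pow]
  split_ifs with h
  · simp [h]
  · exact zero_mem _

theorem IsIntegralDependence.mul (hp : p.IsIntegralDependence I n)
    (hq : q.IsIntegralDependence I m) : (p * q).IsIntegralDependence I (n + m) := by
  refine ⟨natDegree_mul_le.trans (add_le_add hp.1 hq.1), ?_, fun i => ?_⟩
  · rw [coeff_mul_add_eq_of_natDegree_le hp.1 hq.1, hp.2.1, hq.2.1, one_mul]
  · rw [coeff_mul]
    refine sum_mem fun ab hab => ?_
    rw [HasAntidiagonal.mem_antidiagonal] at hab
    exact pow_le_pow_right (by omega) (pow_add I _ _ ▸ mul_mem_mul (hp.2.2 ab.1) (hq.2.2 ab.2))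

theorem IsIntegralDependence.pow (hp : p.IsIntegralDependence I n) (k : ℕ) :
    (p ^ k).IsIntegralDependence I (n * k) := by
  induction k with
  | zero => simpa using isIntegralDependence_X_pow I 0
  | succ k ih => simpa [pow_succ, Nat.mul_succ] using ih.mul hp

theorem isIntegralDependence_X_pow_sub_sum {b : ℕ → R} (hb : ∀ i < n, b i ∈ I ^ (n - i)) :
    (X ^ n - ∑ i ∈ range n, C (b i) * X ^ i).IsIntegralDependence I n := by
  have hX := isIntegralDependence_X_pow I n
  have hdeg : (∑ i ∈ range n, C (b i) * X ^ i).natDegree ≤ n :=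
    natDegree_sum_le_of_forall_le _ _ fun i hi =>
      (natDegree_C_mul_X_pow_le _ _).trans (mem_range.mp hi).le
  refine ⟨(natDegree_sub_le_of_le hX.1 hdeg).trans_eq (max_self n), ?_, fun i => ?_⟩
  · simp
  · rw [coeff_sub, finsetSum_coeff]
    refine sub_mem (hX.2.2 i) (sum_mem fun j hj => ?_)
    rw [coeff_C_mul_X_pow]
    split_ifs with h
    · exact h ▸ hb j (mem_range.mp hj)
    · exact zero_mem _

theorem IsIntegralDependence.memIntegralClosure {x : R} (hp : p.IsIntegralDependence I n)
    (hn : 0 < n) (hx : p.eval x = 0) : MemIntegralClosure I x := by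
  refine ⟨n, hn, fun j => p.coeff (n - j), fun j _ hj => ?_, ?_⟩
  · simpa [Nat.sub_sub_self hj] using hp.2.2 (n - j)
  · rw [← hx, eval_eq_sum_range' (Nat.lt_succ_of_le hp.1), sum_range_succ, hp.2.1, one_mul,
      add_comm, ← Ico_add_one_right_eq_Icc, sum_Ico_reflect (fun i => p.coeff i * x ^ i) 1 le_rfl,
      Nat.add_sub_cancel, Nat.sub_self, range_eq_Ico]

end Polynomial

theorem MemIntegralClosure.exists_pow_add_mem_pow {I : Ideal R} {x : R}
    (h : MemIntegralClosure I x) : ∃ k, ∀ m, x ^ (k + m) ∈ I ^ m := by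
  obtain ⟨n, hn, a, ha, heq⟩ := h
  obtain ⟨k, rfl⟩ : ∃ k, n = k + 1 := ⟨n - 1, by omega⟩
  refine ⟨k, fun m => ?_⟩
  induction m using Nat.strong_induction_on with
  | _ m ih =>
    obtain _ | m := m
    · simp
    have hxm : x ^ (k + (m + 1)) = -∑ j ∈ Icc 1 (k + 1), a j * (x ^ (k + 1 - j) * x ^ m) := by
      rw [show k + (m + 1) = k + 1 + m by omega, pow_add, eq_neg_of_add_eq_zero_left heq, neg_mul,
        sum_mul]
      simp only [mul_assoc]
    rw [hxm]
    refine neg_mem (sum_mem fun j hj => ?_)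
    obtain ⟨hj1, hjk⟩ := mem_Icc.mp hj
    by_cases hjm : j ≤ m + 1
    · rw [← pow_add, show k + 1 - j + m = k + (m + 1 - j) by omega]
      have := mul_mem_mul (ha j hj1 hjk) (ih (m + 1 - j) (by omega))
      rwa [← pow_add, Nat.add_sub_cancel' hjm] at this
    · exact mul_mem_right _ _ (pow_le_pow_right (by omega) (ha j hj1 hjk))

theorem exists_notMem_mul_pow_eq_zero_of_mem_minimalPrimes {P : Ideal R}
    (hP : P ∈ minimalPrimes R) {x : R} (hx : x ∈ P) : ∃ s ∉ P, ∃ k, s * x ^ k = 0 := by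
  have := hP.isPrime
  have hrad : algebraMap R (Localization.AtPrime P) x ∈
      ((⊥ : Ideal R).map (algebraMap R _)).radical := by
    rw [IsLocalization.AtPrime.radical_map_of_mem_minimalPrimes _ P ⊥ hP]
    exact mem_map_of_mem _ hx
  obtain ⟨k, hk⟩ := hrad
  rw [Ideal.map_bot, mem_bot, ← map_pow, IsLocalization.map_eq_zero_iff P.primeCompl] at hk
  obtain ⟨⟨s, hs⟩, hsk⟩ := hk
  exact ⟨s, hs, k, hsk⟩

theorem MemRzero.isNilpotent_of_mul_eq_zero {c z : R} (hc : MemRzero c) (h : c * z = 0) :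
    IsNilpotent z := by
  rw [← mem_nilradical, nilradical, ← sInf_minimalPrimes, Submodule.mem_sInf]
  intro P hP
  exact (hP.isPrime.mem_or_mem (h ▸ zero_mem P)).resolve_left (hc P hP)

theorem exists_memRzero_mem_of_forall_not_le [IsNoetherianRing R] {L : Ideal R}
    (h : ∀ P ∈ minimalPrimes R, ¬L ≤ P) : ∃ c ∈ L, MemRzero c := by
  by_contra! hL
  have hcover : (L : Set R) ⊆ ⋃ P ∈ minimalPrimes R, (P : Set R) := fun c hc => by
    obtain ⟨P, hP, hcP⟩ := not_forall₂.mp (hL c hc)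
    exact Set.mem_biUnion hP (not_not.mp hcP)
  obtain ⟨P, hP, hLP⟩ := (subset_union_prime_finite (minimalPrimes.finite_of_isNoetherianRing R)
    ⊥ ⊥ fun P hP _ _ => hP.isPrime).mp hcover
  exact h P hP hLP

theorem exists_memRzero_mul_pow_eq_mul_pow_add [IsNoetherianRing R] (x : R) (k : ℕ) :
    ∃ c, MemRzero c ∧ ∃ r N, c * x ^ N = r * x ^ (k + N) := by
  -- the elements killed by some power of `x`
  let T := RingHom.ker (algebraMap R (Localization.Away x))
  have hL : ∀ P ∈ minimalPrimes R, ¬span {x ^ k} ⊔ T ≤ P := fun P hP hle => by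
    have hPprime := hP.isPrime
    by_cases hx : x ∈ P
    · obtain ⟨s, hs, j, hsj⟩ := exists_notMem_mul_pow_eq_zero_of_mem_minimalPrimes hP hx
      refine hs (hle (mem_sup_right ?_))
      exact (IsLocalization.map_eq_zero_iff (Submonoid.powers x) _ s).mpr
        ⟨⟨x ^ j, j, rfl⟩, by rw [mul_comm, hsj]⟩
    · exact hx (hPprime.mem_of_pow_mem k (hle (mem_sup_left (mem_span_singleton_self _))))
  obtain ⟨c, hc, hcR⟩ := exists_memRzero_mem_of_forall_not_le hL
  obtain ⟨u, hu, e, he, rfl⟩ := Submodule.mem_sup.mp hc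
  obtain ⟨r, rfl⟩ := mem_span_singleton'.mp hu
  obtain ⟨⟨_, N, rfl⟩, heN⟩ := (IsLocalization.map_eq_zero_iff (Submonoid.powers x) _ e).mp he
  exact ⟨_, hcR, r, N, by rw [add_mul, mul_comm e, heN, add_zero, mul_assoc, pow_add]⟩

theorem exists_mul_pow_eq_mul_sum_of_forall_mul_pow_mem [IsNoetherianRing R] {I : Ideal R}
    {x y : R} (h : ∀ m, y * x ^ m ∈ I ^ m) :
    ∃ d, 0 < d ∧ ∃ b : ℕ → R, (∀ i < d, b i ∈ I ^ (d - i)) ∧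
      y * x ^ d = y * ∑ i ∈ range d, b i * x ^ i := by
  let f : ℕ → reesAlgebra I := fun m =>
    ⟨monomial m (y * x ^ m), reesAlgebra.monomial_mem.mpr (h m)⟩
  let g : ℕ →o Ideal (reesAlgebra I) := ⟨fun k => span (f '' ↑(range k)),
    fun k l hkl => span_mono (Set.image_mono (by simpa using hkl))⟩
  obtain ⟨N, hN⟩ := monotone_stabilizes_iff_noetherian.mpr inferInstance g
  have hmem : f (N + 1) ∈ span (f '' ↑(range (N + 1))) := by
    change f (N + 1) ∈ g (N + 1)
    rw [← hN (N + 1) (by omega), hN (N + 2) (by omega)]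
    exact subset_span ⟨N + 1, by simp, rfl⟩
  obtain ⟨α, hα⟩ := (Submodule.mem_span_image_finset_iff_exists_fun' _).mp hmem
  refine ⟨N + 1, N.succ_pos, fun i => (α i : R[X]).coeff (N + 1 - i),
    fun i _ => (mem_reesAlgebra_iff I _).mp (α i).2 _, ?_⟩
  have hcoeff := congrArg (fun a : reesAlgebra I => (a : R[X]).coeff (N + 1)) hα
  simp only [smul_eq_mul, AddSubmonoidClass.coe_finsetSum, Subalgebra.coe_mul,
    finsetSum_coeff] at hcoeff
  calc y * x ^ (N + 1) = (monomial (N + 1) (y * x ^ (N + 1))).coeff (N + 1) := by simp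
    _ = ∑ i ∈ range (N + 1), ((α i : R[X]) * monomial i (y * x ^ i)).coeff (N + 1) := hcoeff.symm
    _ = _ := by
      rw [mul_sum]
      refine sum_congr rfl fun i hi => ?_
      rw [mul_left_comm, ← Nat.sub_add_cancel (mem_range.mp hi).le, coeff_mul_monomial,
        Nat.sub_add_cancel (mem_range.mp hi).le]

end

/-- Let `R` be a commutative Noetherian ring, `I` an ideal and `x ∈ R`.  Then `x` lies in the
integral closure of `I` if and only if there exist `c ∈ R⁰` and an integer `n₀` such that
`c * x ^ n ∈ I ^ n` for all `n ≥ n₀`. -/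
theorem integralClosure_iff_exists_mul_pow_mem {R : Type*} [CommRing R] [IsNoetherianRing R]
    (I : Ideal R) (x : R) :
    MemIntegralClosure I x ↔
      ∃ c : R, MemRzero c ∧ ∃ n₀ : ℕ, ∀ n : ℕ, n₀ ≤ n → c * x ^ n ∈ I ^ n := by
  constructor
  · intro h
    obtain ⟨k, hk⟩ := h.exists_pow_add_mem_pow
    obtain ⟨c, hc, r, N, hcN⟩ := exists_memRzero_mul_pow_eq_mul_pow_add x k
    refine ⟨c, hc, N, fun n hn => ?_⟩
    obtain ⟨m, rfl⟩ := Nat.exists_eq_add_of_le hn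
    rw [pow_add x, ← mul_assoc, hcN, mul_assoc, ← pow_add, add_assoc]
    exact mul_mem_left _ r (hk (N + m))
  · rintro ⟨c, hc, n₀, H⟩
    have hmem (m : ℕ) : c * x ^ n₀ * x ^ m ∈ I ^ m := by
      rw [mul_assoc, ← pow_add]
      exact pow_le_pow_right (Nat.le_add_left m n₀) (H _ (Nat.le_add_right n₀ m))
    obtain ⟨d, hd, b, hb, heq⟩ := exists_mul_pow_eq_mul_sum_of_forall_mul_pow_mem hmem
    let p : R[X] := X ^ n₀ * (X ^ d - ∑ i ∈ range d, C (b i) * X ^ i)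
    have hp : p.IsIntegralDependence I (n₀ + d) :=
      (isIntegralDependence_X_pow I n₀).mul (isIntegralDependence_X_pow_sub_sum hb)
    have hcp : c * p.eval x = 0 := by
      simp only [p, eval_mul, eval_sub, eval_pow, eval_X, eval_finsetSum, eval_C]
      linear_combination heq
    obtain ⟨k, hk⟩ := hc.isNilpotent_of_mul_eq_zero hcp
    exact (hp.pow (k + 1)).memIntegralClosure (by positivity)
      (by rw [eval_pow, pow_succ, hk, zero_mul])
end

section
/- Let (R,m) be a Noetherian local ring of prime characteristic p, let I ⊆ R be an ideal of height g > 0, and let a_1, …, a_ℓ ∈ I (with ℓ ≥ g) be such that J = (a_1, …, a_ℓ) is a reduction of I. Let w ≥ 0 and M ≥ 0 be integers, set J_i = (a_1, …, a_i), and suppose t_1 = ⋯ = t_g = 0 and t_{g+1}, …, t_ℓ ∈ R satisfy t_j I^{M+k} ⊆ J_{j-1}^k I^M for all g+1 ≤ j ≤ ℓ and all 0 ≤ k ≤ w + ℓ. Set b_i = a_i + t_i and 𝔄 = (b_1, …, b_ℓ). Then the integral closure of I^{ℓ+w} is contained in the tight closure (𝔄^{w+1})*. -/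
open Ideal IsLocalRing

/-- The `q`-th bracket power `I^{[q]}` of an ideal: the ideal generated by the
`q`-th powers of all elements of `I`. -/
def bracketPow {R : Type*} [CommRing R] (I : Ideal R) (q : ℕ) : Ideal R :=
  Ideal.span ((fun x => x ^ q) '' (I : Set R))

/-- Membership in the tight closure `I*` of `I` in a ring of characteristic `p`. -/
def MemTightClosure {R : Type*} [CommRing R] (p : ℕ) (I : Ideal R) (x : R) : Prop :=
  ∃ c : R, MemRzero c ∧ ∃ e₀ : ℕ, ∀ e : ℕ, e₀ ≤ e → c * x ^ p ^ e ∈ bracketPow I (p ^ e)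

/-- The height of an ideal: the infimum of the heights of the primes containing it
(`⊤` for the unit ideal). -/
noncomputable def idealHeight {R : Type*} [CommRing R] (I : Ideal R) : ℕ∞ :=
  ⨅ (P : PrimeSpectrum R) (_ : I ≤ P.asIdeal), Order.height P

/-- `J` is a reduction of `I` if `J ⊆ I` and `J * I ^ n = I ^ (n + 1)` for some `n ≥ 0`. -/
def IsReduction {R : Type*} [CommRing R] (J I : Ideal R) : Prop :=
  J ≤ I ∧ ∃ n : ℕ, J * I ^ n = I ^ (n + 1)

/-- The ideal generated by the first `i` entries of the family `a`. -/
def partialSpan {R : Type*} [CommRing R] {ℓ : ℕ} (a : Fin ℓ → R) (i : ℕ) : Ideal R :=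
  Ideal.span (a '' {j : Fin ℓ | (j : ℕ) < i})

/-!
Write `q = p ^ e`. Since `z` is integral over `K = I ^ (ℓ + w)`, the ideal `K` is a reduction of
`K + (z)`, so a fixed power of `K` multiplies every `z ^ q` into `K ^ q`. As `J` is a reduction of
`I` and `I` lies in no minimal prime, prime avoidance then gives one `c ∈ R⁰` with
`c z ^ q ∈ J ^ (q (w + ℓ) + 1) I ^ M` for all `q`.

It remains to show `u ^ q J_m ^ D I ^ M ⊆ (𝔄 ^ (w + 1)) ^ [q]` for `u ∈ 𝔄 ^ β` whenever
`D + q β > q (w + m)`, by induction on `m`. Expanding `J_{m+1} ^ D` in powers of `a_m`, a factor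
`a_m ^ (q f + r)` is rewritten by Frobenius as `(b_m ^ q - t_m ^ q) ^ f a_m ^ r` and telescoped:
the `b_m ^ q`-part moves `f` into `β`, and every other term carries a single `t_m ^ q`, which is
`0` for `m < g` and otherwise, by the hypothesis on `t_m`, turns the accompanying powers of
`a_m ∈ I` into powers of `J_m` at the cost of only `q` in `D + q β`.
-/

section General

variable {R : Type*} [CommRing R]

theorem Ideal.sup_pow_mul_le {I J N K : Ideal R} {n : ℕ}
    (h : ∀ i j, i + j = n → I ^ i * J ^ j * N ≤ K) : (I ⊔ J) ^ n * N ≤ K := by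
  induction n generalizing N with
  | zero => simpa using h 0 0 rfl
  | succ n ih =>
    rw [pow_succ, mul_assoc, sup_mul, mul_sup]
    refine sup_le (ih fun i j hij => ?_) (ih fun i j hij => ?_)
    · calc I ^ i * J ^ j * (I * N) = I ^ (i + 1) * J ^ j * N := by ring
        _ ≤ K := h _ _ (by omega)
    · calc I ^ i * J ^ j * (J * N) = I ^ i * J ^ (j + 1) * N := by ring
        _ ≤ K := h _ _ (by omega)

theorem Ideal.pow_add_eq_pow_mul_of_mul_pow_eq {I J : Ideal R} {n r : ℕ}
    (h : J * I ^ n = I ^ (n + 1)) (hr : n ≤ r) (k : ℕ) : I ^ (r + k) = J ^ k * I ^ r := by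
  have hJr : J * I ^ r = I ^ (r + 1) := by
    obtain ⟨s, rfl⟩ := Nat.exists_eq_add_of_le hr
    rw [pow_add, ← mul_assoc, h, ← pow_add]
    ring_nf
  induction k with
  | zero => simp
  | succ k ih => rw [← add_assoc, pow_succ, ih, mul_assoc, ← pow_succ, ← hJr]; ring

theorem MemIntegralClosure.exists_mul_sup_pow_eq {K : Ideal R} {z : R}
    (hz : MemIntegralClosure K z) : ∃ d, K * (K ⊔ span {z}) ^ d = (K ⊔ span {z}) ^ (d + 1) := by
  obtain ⟨n, hn, c, hc, hzc⟩ := hz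
  obtain ⟨d, rfl⟩ : ∃ d, n = d + 1 := ⟨n - 1, by omega⟩
  set L := K ⊔ span {z}
  have hzL : z ∈ L := mem_sup_right (mem_span_singleton_self z)
  have hKL : ∀ i j, i + j = d → K * (K ^ i * L ^ j) ≤ K * L ^ d := fun i j hij =>
    mul_mono_right (by rw [← hij, pow_add]; exact mul_mono_left (pow_le_pow_left' le_sup_left i))
  refine ⟨d, le_antisymm (by rw [pow_succ']; exact mul_mono_left le_sup_left) ?_⟩
  refine (mul_one (L ^ (d + 1))).symm.le.trans (Ideal.sup_pow_mul_le fun i j hij => ?_)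
  rw [mul_one, span_singleton_pow]
  rcases i with _ | i
  · rw [pow_zero, one_mul, span_le, Set.singleton_subset_iff, show j = d + 1 by omega,
      eq_neg_of_add_eq_zero_left hzc]
    refine neg_mem (sum_mem _ fun k hk => ?_)
    obtain ⟨hk1, hkn⟩ := Finset.mem_Icc.mp hk
    obtain ⟨k, rfl⟩ : ∃ k', k = k' + 1 := ⟨k - 1, by omega⟩
    refine hKL k (d - k) (by omega) ?_
    rw [← mul_assoc, ← pow_succ', Nat.add_sub_add_right]
    exact mul_mem_mul (hc _ hk1 hkn) (pow_mem_pow hzL _)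
  · calc K ^ (i + 1) * span {z ^ j} = K * (K ^ i * span {z} ^ j) := by
          rw [span_singleton_pow, pow_succ']; ring
      _ ≤ K * (K ^ i * L ^ j) := mul_mono_right (mul_mono_right (pow_le_pow_left' le_sup_right j))
      _ ≤ K * L ^ d := hKL i j (by omega)

theorem MemIntegralClosure.exists_pow_mul_span_le {K : Ideal R} {z : R}
    (hz : MemIntegralClosure K z) : ∃ d, ∀ q, K ^ d * span {z ^ q} ≤ K ^ q := by
  obtain ⟨d, hd⟩ := hz.exists_mul_sup_pow_eq
  refine ⟨d, fun q => ?_⟩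
  calc K ^ d * span {z ^ q} ≤ (K ⊔ span {z}) ^ d * (K ⊔ span {z}) ^ q :=
        mul_le_mul' (pow_le_pow_left' le_sup_left d)
          (by rw [← span_singleton_pow]; exact pow_le_pow_left' le_sup_right q)
    _ = K ^ q * (K ⊔ span {z}) ^ d := by
        rw [← pow_add, pow_add_eq_pow_mul_of_mul_pow_eq hd le_rfl]
    _ ≤ K ^ q := mul_le_left

theorem not_le_of_idealHeight_ne_zero {I P : Ideal R} (hI : idealHeight I ≠ 0)
    (hP : P ∈ minimalPrimes R) : ¬ I ≤ P := by
  intro hIP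
  have hmin : IsMin (⟨P, hP.1.1⟩ : PrimeSpectrum R) := fun Q hQ => hP.2 ⟨Q.2, bot_le⟩ hQ
  refine hI (le_antisymm ?_ bot_le)
  exact (iInf₂_le (⟨P, hP.1.1⟩ : PrimeSpectrum R) hIP).trans (Order.height_eq_zero.mpr hmin).le

theorem exists_memRzero_mem [IsNoetherianRing R] {Q : Ideal R}
    (hQ : ∀ P ∈ minimalPrimes R, ¬ Q ≤ P) : ∃ c ∈ Q, MemRzero c := by
  by_contra! h
  have hcover : (Q : Set R) ⊆ ⋃ P ∈ minimalPrimes R, (P : Set R) := fun c hc => by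
    simpa [MemRzero] using h c hc
  obtain ⟨P, hP, hQP⟩ := (subset_union_prime_finite (minimalPrimes.finite_of_isNoetherianRing R)
    (f := id) ⊥ ⊥ fun P hP _ _ => hP.1.1).mp hcover
  exact hQ P hP hQP

theorem MemIntegralClosure.exists_memRzero_mul_pow_mem [IsNoetherianRing R] {I J : Ideal R}
    {N n : ℕ} {z : R} (hz : MemIntegralClosure (I ^ N) z) (hI : idealHeight I ≠ 0)
    (hn : J * I ^ n = I ^ (n + 1)) (M : ℕ) :
    ∃ c, MemRzero c ∧ ∀ q, c * z ^ q ∈ J ^ (q * N + 1) * I ^ M := by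
  obtain ⟨d, hd⟩ := hz.exists_pow_mul_span_le
  set r := max n M
  obtain ⟨c, hc, hcR⟩ := exists_memRzero_mem (Q := I ^ (N * d + (r + 1)))
    fun P hP hle => not_le_of_idealHeight_ne_zero hI hP (hP.1.1.le_of_pow_le hle)
  refine ⟨c, hcR, fun q => ?_⟩
  refine (?_ : I ^ (N * d + (r + 1)) * span {z ^ q} ≤ _)
    (mul_mem_mul hc (mem_span_singleton_self _))
  calc I ^ (N * d + (r + 1)) * span {z ^ q}
      = I ^ (r + 1) * ((I ^ N) ^ d * span {z ^ q}) := by rw [pow_add, pow_mul]; ring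
    _ ≤ I ^ (r + 1) * (I ^ N) ^ q := mul_mono_right (hd q)
    _ = I ^ (r + (q * N + 1)) := by rw [← pow_mul, ← pow_add]; ring_nf
    _ = J ^ (q * N + 1) * I ^ r := pow_add_eq_pow_mul_of_mul_pow_eq hn (le_max_left n M) _
    _ ≤ J ^ (q * N + 1) * I ^ M := mul_mono_right (pow_le_pow_right (le_max_right n M))

theorem pow_mem_bracketPow {A : Ideal R} {u : R} (hu : u ∈ A) (q : ℕ) : u ^ q ∈ bracketPow A q :=
  subset_span ⟨u, hu, rfl⟩

theorem span_singleton_pow_mul_pow_le {t : R} {I J : Ideal R} {M K : ℕ}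
    (h : ∀ k ≤ K, span {t} * I ^ (M + k) ≤ J ^ k * I ^ M) (s : ℕ) {c : ℕ} (hc : c ≤ s * K) :
    span {t ^ s} * I ^ (M + c) ≤ J ^ c * I ^ M := by
  induction s generalizing c with
  | zero => simp_all
  | succ s ih =>
    obtain ⟨k, c', hk, hc', rfl⟩ : ∃ k c', k ≤ K ∧ c' ≤ s * K ∧ c = k + c' :=
      ⟨min c K, c - min c K, min_le_right _ _, by rw [add_one_mul] at hc; omega, by omega⟩
    calc span {t ^ (s + 1)} * I ^ (M + (k + c'))
        = span {t ^ s} * I ^ c' * (span {t} * I ^ (M + k)) := by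
          rw [pow_succ, ← span_singleton_mul_span_singleton, add_left_comm, pow_add]; ring
      _ ≤ span {t ^ s} * I ^ c' * (J ^ k * I ^ M) := mul_mono_right (h k hk)
      _ = J ^ k * (span {t ^ s} * I ^ (M + c')) := by rw [pow_add]; ring
      _ ≤ J ^ k * (J ^ c' * I ^ M) := mul_mono_right (ih hc')
      _ = J ^ (k + c') * I ^ M := by rw [pow_add, mul_assoc]

theorem pow_mul_mul_mem_pow_mul {t x y : R} {I J : Ideal R} {M K s c D : ℕ}
    (h : ∀ k ≤ K, ∀ x ∈ I ^ (M + k), t * x ∈ J ^ k * I ^ M) (hc : c ≤ s * K)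
    (hx : x ∈ I ^ c) (hy : y ∈ J ^ D * I ^ M) : t ^ s * (x * y) ∈ J ^ (D + c) * I ^ M := by
  have hle :=
    span_singleton_pow_mul_pow_le (fun k hk => span_singleton_mul_le_iff.mpr (h k hk)) s hc
  refine (?_ : span {t ^ s} * (I ^ c * (J ^ D * I ^ M)) ≤ _)
    (mul_mem_mul (mem_span_singleton_self _) (mul_mem_mul hx hy))
  calc span {t ^ s} * (I ^ c * (J ^ D * I ^ M)) = J ^ D * (span {t ^ s} * I ^ (M + c)) := by
        rw [pow_add]; ring
    _ ≤ J ^ D * (J ^ c * I ^ M) := mul_mono_right hle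
    _ = J ^ (D + c) * I ^ M := by rw [pow_add, mul_assoc]

theorem pow_mul_eq_add_pow_mul_sub (p : ℕ) [ExpChar R p] (x y : R) (e f : ℕ) :
    x ^ (p ^ e * f) = (x + y) ^ (p ^ e * f)
      - y ^ p ^ e * ∑ j ∈ Finset.range f, (x + y) ^ (p ^ e * j) * x ^ (p ^ e * (f - 1 - j)) := by
  have hfrob : (x + y) ^ p ^ e = x ^ p ^ e + y ^ p ^ e := add_pow_expChar_pow x y p e
  simp only [pow_mul]
  linear_combination geom_sum₂_mul ((x + y) ^ p ^ e) (x ^ p ^ e) f -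
    (∑ i ∈ Finset.range f, ((x + y) ^ p ^ e) ^ i * (x ^ p ^ e) ^ (f - 1 - i)) * hfrob

theorem pow_mul_mem_bracketPow_of_le {A : Ideal R} {u : R} {β w : ℕ} (hβ : w + 1 ≤ β)
    (hu : u ∈ A ^ β) (q : ℕ) (y : R) : u ^ q * y ∈ bracketPow (A ^ (w + 1)) q :=
  mul_mem_right _ _ (pow_mem_bracketPow (pow_le_pow_right hβ hu) q)

end General

section PartialSpan

variable {R : Type*} [CommRing R] {ℓ : ℕ} (a : Fin ℓ → R)

theorem partialSpan_zero : partialSpan a 0 = ⊥ := by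
  simp [partialSpan]

theorem partialSpan_succ (j : Fin ℓ) :
    partialSpan a (j + 1) = partialSpan a j ⊔ span {a j} := by
  have hset : {i : Fin ℓ | (i : ℕ) < j + 1} = {i : Fin ℓ | (i : ℕ) < j} ∪ {j} := by
    ext i
    simp only [Set.mem_ofPred_eq, Set.mem_union, Set.mem_singleton_iff, Fin.ext_iff]
    omega
  rw [partialSpan, hset, Set.image_union, Set.image_singleton, span_union, partialSpan]

theorem partialSpan_self : partialSpan a ℓ = span (Set.range a) := by
  simp [partialSpan]

def AbsorbsIntoBracketPow (t : Fin ℓ → R) (I : Ideal R) (w M q m : ℕ) : Prop :=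
  ∀ β D, q * (w + m) < D + q * β → ∀ u ∈ span (Set.range fun i => a i + t i) ^ β,
    ∀ y ∈ partialSpan a m ^ D * I ^ M,
      u ^ q * y ∈ bracketPow (span (Set.range fun i => a i + t i) ^ (w + 1)) q

end PartialSpan

section Absorption

variable {R : Type*} [CommRing R] {ℓ : ℕ} {a t : Fin ℓ → R} {I : Ideal R} {w M g : ℕ}

theorem absorbsIntoBracketPow_zero (q : ℕ) : AbsorbsIntoBracketPow a t I w M q 0 := by
  intro β D hD u hu y hy
  rcases le_or_gt (w + 1) β with hβ | hβ
  · exact pow_mul_mem_bracketPow_of_le hβ hu q y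
  have hD0 : D ≠ 0 := by
    have := Nat.mul_le_mul_left q (show β ≤ w by omega)
    rw [add_zero] at hD
    omega
  rw [partialSpan_zero, bot_pow hD0, bot_mul, mem_bot] at hy
  simp [hy]

variable (p : ℕ) [ExpChar R p] {e : ℕ}

theorem pow_mul_pow_mul_mem_bracketPow (haI : ∀ i, a i ∈ I)
    (ht0 : ∀ i : Fin ℓ, (i : ℕ) < g → t i = 0)
    (htcol : ∀ j : Fin ℓ, g ≤ (j : ℕ) → ∀ k : ℕ, k ≤ w + ℓ →
      ∀ x ∈ I ^ (M + k), t j * x ∈ (partialSpan a (j : ℕ)) ^ k * I ^ M)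
    (j : Fin ℓ) (ih : AbsorbsIntoBracketPow a t I w M (p ^ e) j) {β e₁ e₂ : ℕ}
    (hlow : p ^ e * (w + j + 1) < e₁ + e₂ + p ^ e * β)
    (hcap : e₁ + e₂ + p ^ e * β ≤ p ^ e * (w + j + 1) + 1)
    {u y : R} (hu : u ∈ span (Set.range fun i => a i + t i) ^ β)
    (hy : y ∈ partialSpan a j ^ e₂ * I ^ M) :
    u ^ p ^ e * (a j ^ e₁ * y) ∈
      bracketPow (span (Set.range fun i => a i + t i) ^ (w + 1)) (p ^ e) := by
  set q := p ^ e
  have hq : 0 < q := expChar_pow_pos R p e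
  have hjℓ : q * (w + j + 1) ≤ q * (w + ℓ) := Nat.mul_le_mul_left q (by omega)
  rw [mul_add_one] at hlow hcap hjℓ
  rcases lt_or_ge e₁ q with hsmall | hlarge
  · rw [mul_left_comm]
    exact mul_mem_left _ _ (ih β e₂ (by omega) u hu y hy)
  obtain ⟨f, r, hr, rfl⟩ : ∃ f r, r < q ∧ e₁ = q * f + r :=
    ⟨e₁ / q, e₁ % q, Nat.mod_lt _ hq, (Nat.div_add_mod e₁ q).symm⟩
  set b := a j + t j
  have hub : ∀ i, u * b ^ i ∈ span (Set.range fun i => a i + t i) ^ (β + i) := fun i => by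
    rw [pow_add]
    exact mul_mem_mul hu (pow_mem_pow (subset_span (Set.mem_range_self j)) i)
  have hsplit : u ^ q * (a j ^ (q * f + r) * y) = (u * b ^ f) ^ q * (a j ^ r * y) -
      ∑ i ∈ Finset.range f, (u * b ^ i) ^ q * (t j ^ q * (a j ^ (q * (f - 1 - i) + r) * y)) := by
    have hterm : ∀ i, (u * b ^ i) ^ q * (t j ^ q * (a j ^ (q * (f - 1 - i) + r) * y)) =
        b ^ (q * i) * a j ^ (q * (f - 1 - i)) * (u ^ q * t j ^ q * a j ^ r * y) := fun i => by ring
    rw [Finset.sum_congr rfl fun i _ => hterm i, ← Finset.sum_mul, pow_add,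
      pow_mul_eq_add_pow_mul_sub p (a j) (t j)]
    ring
  rw [hsplit]
  refine sub_mem (ih (β + f) e₂ (by have := mul_add q β f; omega) _ (hub f) _ (mul_mem_left _ _ hy))
    (sum_mem _ fun i hi => ?_)
  rcases lt_or_ge (j : ℕ) g with hjg | hgj
  · simp [ht0 j hjg, hq.ne']
  have hfi : q * (f - 1 - i) + q * i + q = q * f := by
    rw [← mul_add, ← mul_add_one]
    congr 1
    have := Finset.mem_range.mp hi
    omega
  exact ih (β + i) (e₂ + (q * (f - 1 - i) + r)) (by have := mul_add q β i; omega) _ (hub i) _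
    (pow_mul_mul_mem_pow_mul (htcol j hgj) (by omega) (pow_mem_pow (haI j) _) hy)

theorem absorbsIntoBracketPow_succ (haI : ∀ i, a i ∈ I)
    (ht0 : ∀ i : Fin ℓ, (i : ℕ) < g → t i = 0)
    (htcol : ∀ j : Fin ℓ, g ≤ (j : ℕ) → ∀ k : ℕ, k ≤ w + ℓ →
      ∀ x ∈ I ^ (M + k), t j * x ∈ (partialSpan a (j : ℕ)) ^ k * I ^ M)
    {m : ℕ} (hm : m < ℓ) (ih : AbsorbsIntoBracketPow a t I w M (p ^ e) m) :
    AbsorbsIntoBracketPow a t I w M (p ^ e) (m + 1) := by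
  obtain ⟨j, rfl⟩ : ∃ j : Fin ℓ, (j : ℕ) = m := ⟨⟨m, hm⟩, rfl⟩
  intro β D hD u hu y hy
  rcases le_or_gt (w + 1) β with hβ | hβ
  · exact pow_mul_mem_bracketPow_of_le hβ hu _ y
  have hqβ : p ^ e * β ≤ p ^ e * (w + j + 1) := Nat.mul_le_mul_left _ (by omega)
  rw [← add_assoc] at hD
  -- shrinking `D` bounds the powers of `a j` that `t j` has to absorb
  obtain ⟨D₁, hD₁⟩ : ∃ D₁, D₁ + p ^ e * β = p ^ e * (w + j + 1) + 1 := ⟨_, Nat.sub_add_cancel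
    (by omega)⟩
  have hy₁ : y ∈ (partialSpan a j ⊔ span {a j}) ^ D₁ * I ^ M := by
    rw [← partialSpan_succ]
    exact mul_mono_left (pow_le_pow_right (by omega)) hy
  have hcolon := Ideal.sup_pow_mul_le (K := (bracketPow (span (Set.range fun i => a i + t i) ^
    (w + 1)) (p ^ e)).colon {u ^ p ^ e}) (fun e₂ e₁ he => ?_) hy₁
  · rwa [Submodule.mem_colon_singleton, smul_eq_mul, mul_comm] at hcolon
  rw [span_singleton_pow, mul_comm (partialSpan a j ^ e₂), mul_assoc, span_singleton_mul_le_iff]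
  intro x hx
  rw [Submodule.mem_colon_singleton, smul_eq_mul, mul_comm]
  exact pow_mul_pow_mul_mem_bracketPow p haI ht0 htcol j ih (by omega) (by omega) hu hx

theorem absorbsIntoBracketPow (haI : ∀ i, a i ∈ I)
    (ht0 : ∀ i : Fin ℓ, (i : ℕ) < g → t i = 0)
    (htcol : ∀ j : Fin ℓ, g ≤ (j : ℕ) → ∀ k : ℕ, k ≤ w + ℓ →
      ∀ x ∈ I ^ (M + k), t j * x ∈ (partialSpan a (j : ℕ)) ^ k * I ^ M)
    {m : ℕ} (hm : m ≤ ℓ) : AbsorbsIntoBracketPow a t I w M (p ^ e) m := by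
  induction m with
  | zero => exact absorbsIntoBracketPow_zero _
  | succ m ih => exact absorbsIntoBracketPow_succ p haI ht0 htcol (by omega) (ih (by omega))

end Absorption

theorem integralClosure_pow_subset_tightClosure_general {R : Type*} [CommRing R] [IsNoetherianRing R]
    (p : ℕ) (hp : p.Prime) [CharP R p]
    (I : Ideal R) (g : ℕ) (hg : 0 < g) (hht : idealHeight I = (g : ℕ∞))
    (ℓ : ℕ) (a : Fin ℓ → R) (haI : ∀ i, a i ∈ I)
    (hred : IsReduction (Ideal.span (Set.range a)) I)
    (w M : ℕ) (t : Fin ℓ → R)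
    (ht0 : ∀ i : Fin ℓ, (i : ℕ) < g → t i = 0)
    (htcol : ∀ j : Fin ℓ, g ≤ (j : ℕ) → ∀ k : ℕ, k ≤ w + ℓ →
      ∀ x ∈ I ^ (M + k), t j * x ∈ (partialSpan a (j : ℕ)) ^ k * I ^ M) :
    ∀ z : R, MemIntegralClosure (I ^ (ℓ + w)) z →
      MemTightClosure p (Ideal.span (Set.range fun i => a i + t i) ^ (w + 1)) z := by
  intro z hz
  have := ExpChar.prime (R := R) hp
  obtain ⟨-, n, hn⟩ := hred
  obtain ⟨c, hcR, hc⟩ := hz.exists_memRzero_mul_pow_mem (by rw [hht]; exact_mod_cast hg.ne') hn M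
  refine ⟨c, hcR, 0, fun e _ => ?_⟩
  have hcz := hc (p ^ e)
  rw [← partialSpan_self, add_comm ℓ] at hcz
  simpa using absorbsIntoBracketPow p haI ht0 htcol le_rfl 0 _ (by omega) 1 (by simp) _ hcz

/-- Theorem 3.3: let `(R, 𝔪)` be a Noetherian local ring of characteristic `p`, `I` an ideal
of height `g > 0`, and `a_1, …, a_ℓ ∈ I` (with `ℓ ≥ g`) such that `J = (a_1, …, a_ℓ)` is a
reduction of `I`.  Suppose `t_1 = ⋯ = t_g = 0` and `t_{g+1}, …, t_ℓ` satisfy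
`t_j I^{M+k} ⊆ J_{j-1}^k I^M` for all `g + 1 ≤ j ≤ ℓ` and `0 ≤ k ≤ w + ℓ`, where
`J_i = (a_1, …, a_i)`.  Set `b_i = a_i + t_i` and `𝔄 = (b_1, …, b_ℓ)`.  Then
`closure(I^{ℓ+w}) ⊆ (𝔄^{w+1})*`.  (Indices: `i : Fin ℓ` stands for the subscript `i + 1`.) -/
theorem integralClosure_pow_subset_tightClosure {R : Type*} [CommRing R] [IsNoetherianRing R]
    [IsLocalRing R] (p : ℕ) (hp : p.Prime) [CharP R p]
    (I : Ideal R) (g : ℕ) (hg : 0 < g) (hht : idealHeight I = (g : ℕ∞))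
    (ℓ : ℕ) (hgℓ : g ≤ ℓ) (a : Fin ℓ → R) (haI : ∀ i, a i ∈ I)
    (hred : IsReduction (Ideal.span (Set.range a)) I)
    (w M : ℕ) (t : Fin ℓ → R)
    (ht0 : ∀ i : Fin ℓ, (i : ℕ) < g → t i = 0)
    (htcol : ∀ j : Fin ℓ, g ≤ (j : ℕ) → ∀ k : ℕ, k ≤ w + ℓ →
      ∀ x ∈ I ^ (M + k), t j * x ∈ (partialSpan a (j : ℕ)) ^ k * I ^ M) :
    ∀ z : R, MemIntegralClosure (I ^ (ℓ + w)) z →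
      MemTightClosure p (Ideal.span (Set.range fun i => a i + t i) ^ (w + 1)) z :=
  integralClosure_pow_subset_tightClosure_general p hp I g hg hht ℓ a haI hred w M t ht0 htcol
end

section
/- Let R be a commutative Noetherian ring, let J ⊆ I be ideals of R, let M ≥ 0 be an integer, and let Q be a prime ideal of R containing I. If (J I^M : I^{M+1}) is not contained in Q, then for every integer t ≥ 1 the ideal (J^t I^M : I^{M+t}) is not contained in Q. -/
/-!
If `x I^(M+1) ⊆ J I^M`, then peeling one factor `x I` off `x^(t+1) I^(M+t+1)` at a time gives
`x^t I^(M+t) ⊆ J^t I^M`, i.e. `x^t ∈ (J^t I^M : I^(M+t))`. A prime `Q` containing that colon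
ideal would contain `x^t`, hence `x`.
-/

namespace Ideal

variable {R : Type*} [CommSemiring R]

theorem pow_mul_pow_add_le_pow_mul {K J I : Ideal R} {M : ℕ}
    (h : K * I ^ (M + 1) ≤ J * I ^ M) (t : ℕ) : K ^ t * I ^ (M + t) ≤ J ^ t * I ^ M := by
  induction t with
  | zero => simp
  | succ t ih =>
    calc K ^ (t + 1) * I ^ (M + (t + 1)) = K * I * (K ^ t * I ^ (M + t)) := by ring
      _ ≤ K * I * (J ^ t * I ^ M) := by gcongr
      _ = J ^ t * (K * I ^ (M + 1)) := by ring
      _ ≤ J ^ t * (J * I ^ M) := by gcongr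
      _ = J ^ (t + 1) * I ^ M := by ring

theorem mem_colon_iff_span_singleton_mul_le {A B : Ideal R} {x : R} :
    x ∈ A.colon (B : Set R) ↔ span {x} * B ≤ A := by
  rw [Submodule.mem_colon_iff_le, ← Submodule.ideal_span_singleton_smul, smul_eq_mul]

theorem pow_mem_colon_pow_mul_pow {J I : Ideal R} {M : ℕ} {x : R}
    (hx : x ∈ (J * I ^ M).colon ((I ^ (M + 1) : Ideal R) : Set R)) (t : ℕ) :
    x ^ t ∈ (J ^ t * I ^ M).colon ((I ^ (M + t) : Ideal R) : Set R) := by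
  rw [mem_colon_iff_span_singleton_mul_le] at hx ⊢
  rw [← span_singleton_pow]
  exact pow_mul_pow_add_le_pow_mul hx t

end Ideal

theorem colon_pow_not_le_prime_general {R : Type*} [CommRing R]
    (J I : Ideal R) (M : ℕ) (Q : Ideal R) (hQ : Q.IsPrime)
    (h : ¬ (J * I ^ M).colon ((I ^ (M + 1) : Ideal R) : Set R) ≤ Q) :
    ∀ t : ℕ, 1 ≤ t → ¬ (J ^ t * I ^ M).colon ((I ^ (M + t) : Ideal R) : Set R) ≤ Q := by
  obtain ⟨x, hx, hxQ⟩ := SetLike.not_le_iff_exists.mp h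
  intro t _ hle
  exact hxQ (hQ.mem_of_pow_mem t (hle (Ideal.pow_mem_colon_pow_mul_pow hx t)))

/-- Let `R` be a commutative Noetherian ring, `J ⊆ I` ideals, `M ≥ 0`, and `Q` a prime
containing `I`.  If `(J I^M : I^{M+1})` is not contained in `Q`, then for every `t ≥ 1` the
ideal `(J^t I^M : I^{M+t})` is not contained in `Q`. -/
theorem colon_pow_not_le_prime {R : Type*} [CommRing R] [IsNoetherianRing R]
    (J I : Ideal R) (hJI : J ≤ I) (M : ℕ) (Q : Ideal R) (hQ : Q.IsPrime) (hIQ : I ≤ Q)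
    (h : ¬ (J * I ^ M).colon ((I ^ (M + 1) : Ideal R) : Set R) ≤ Q) :
    ∀ t : ℕ, 1 ≤ t → ¬ (J ^ t * I ^ M).colon ((I ^ (M + t) : Ideal R) : Set R) ≤ Q :=
  colon_pow_not_le_prime_general J I M Q hQ h
end

section
/- Let R be a commutative ring, let J ⊆ I and H be ideals of R, let a ∈ I and t ∈ R, and set b = a + t, K = J + H, and L = I + H. Suppose that L : b = L and K : b = K. Then (K + (b)) : t ⊆ L + (K : (J : t)). -/
/-! Write `x * t = k + r * b` with `k ∈ K`. Then `(x - r) * b = x * a + k ∈ L`, so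
`x - r ∈ L : b = L`; and for `y ∈ J : t`, `r * y * b = (y * t) * x - y * k ∈ K`, so `r ∈ K : (J : t)`. -/

namespace Ideal

variable {R : Type*} [CommRing R]

theorem exists_mul_eq_add_mul_of_mem_colon_sup_span {K : Ideal R} {b t x : R}
    (hx : x ∈ (K + span {b}).colon (span {t})) : ∃ k ∈ K, ∃ r, x * t = k + r * b := by
  rw [mem_colon_span_singleton] at hx
  obtain ⟨k, hk, z, hz, hsum⟩ := Submodule.mem_sup.mp hx
  obtain ⟨r, rfl⟩ := mem_span_singleton'.mp hz
  exact ⟨k, hk, r, hsum.symm⟩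

theorem sub_mem_of_mul_eq_add_mul {L : Ideal R} {a t x k r : R}
    (hL : L.colon (span {a + t}) ≤ L) (ha : a ∈ L) (hk : k ∈ L)
    (h : x * t = k + r * (a + t)) : x - r ∈ L := by
  apply hL
  rw [mem_colon_span_singleton]
  have hmul : (x - r) * (a + t) = x * a + k := by linear_combination h
  rw [hmul]
  exact L.add_mem (L.mul_mem_left x ha) hk

theorem mem_colon_colon_of_mul_eq_add_mul {J K : Ideal R} {b t x k r : R}
    (hK : K.colon (span {b}) ≤ K) (hJK : J ≤ K) (hk : k ∈ K) (h : x * t = k + r * b) :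
    r ∈ K.colon (J.colon (span {t})) := by
  rw [Submodule.mem_colon]
  intro y hy
  rw [SetLike.mem_coe, mem_colon_span_singleton] at hy
  apply hK
  rw [mem_colon_span_singleton, smul_eq_mul]
  have hmul : r * y * b = y * t * x - y * k := by linear_combination -y * h
  rw [hmul]
  exact K.sub_mem (K.mul_mem_right x (hJK hy)) (K.mul_mem_left y hk)

end Ideal

/-- Let `R` be a commutative ring, `J ⊆ I` and `H` ideals, `a ∈ I`, `t ∈ R`, and set
`b = a + t`, `K = J + H`, `L = I + H`.  If `L : b = L` and `K : b = K`, then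
`(K + (b)) : t ⊆ L + (K : (J : t))`. -/
theorem colon_add_span_le {R : Type*} [CommRing R] (J I H : Ideal R) (hJI : J ≤ I)
    (a t : R) (ha : a ∈ I) (b : R) (hb : b = a + t)
    (K L : Ideal R) (hK : K = J + H) (hL : L = I + H)
    (hLb : L.colon (Ideal.span {b}) = L) (hKb : K.colon (Ideal.span {b}) = K) :
    (K + Ideal.span {b}).colon (Ideal.span {t}) ≤
      L + K.colon (J.colon (Ideal.span {t})) := by
  subst hb hK hL
  intro x hx
  obtain ⟨k, hk, r, hxt⟩ := Ideal.exists_mul_eq_add_mul_of_mem_colon_sup_span hx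
  have hxr : x - r ∈ I + H :=
    Ideal.sub_mem_of_mul_eq_add_mul hLb.le (Ideal.mem_sup_left ha) (sup_le_sup_right hJI H hk) hxt
  have hr : r ∈ (J + H).colon (J.colon (Ideal.span {t})) :=
    Ideal.mem_colon_colon_of_mul_eq_add_mul hKb.le le_sup_left hk hxt
  simpa using Submodule.add_mem_sup hxr hr
end
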